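/- arXiv:2102.11592 — 4 statements merged into one kernel-verified Lean document; each statement's English description precedes it below -/
import Mathlib

section
/- (Sufficient condition for positive price of opacity.) If P_{x∼D}[x ∈ E] > 2·err(f,f), then POP = err(f,f̂) − err(f,f) > 0. Consequently, if err(f,f) = err(f*,f*) + ε₁ and P[E] > 2·err(f*,f*) + 2ε₁, then POP > 0. -/
open MeasureTheory

/-- Sufficient condition for positive price of opacity. -/
theorem pop_pos_of_enlargement_mass
    {X : Type*} [MeasurableSpace X] (D : Measure X) [IsProbabilityMeasure D]
    (h f fhat : X → ℤ) (Δf Δfhat : X → X)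
    (hvalh : ∀ x, h x = 1 ∨ h x = -1)
    (hvalf : ∀ x, f x = 1 ∨ f x = -1)
    (hm1 : MeasurableSet {x | h x ≠ f (Δf x)})
    (hm2 : MeasurableSet {x | h x ≠ f (Δfhat x)})
    (hmE : MeasurableSet {x | f (Δf x) ≠ f (Δfhat x)}) :
    ((D {x | f (Δf x) ≠ f (Δfhat x)}).toReal
        > 2 * (D {x | h x ≠ f (Δf x)}).toReal
      → 0 < (D {x | h x ≠ f (Δfhat x)}).toReal - (D {x | h x ≠ f (Δf x)}).toReal)
    ∧ (∀ errstar ε₁ : ℝ,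
        (D {x | h x ≠ f (Δf x)}).toReal = errstar + ε₁ →
        (D {x | f (Δf x) ≠ f (Δfhat x)}).toReal > 2 * errstar + 2 * ε₁ →
        0 < (D {x | h x ≠ f (Δfhat x)}).toReal - (D {x | h x ≠ f (Δf x)}).toReal) := by
  have hsub : {x | f (Δf x) ≠ f (Δfhat x)} ⊆
      {x | h x ≠ f (Δf x)} ∪ {x | h x ≠ f (Δfhat x)} := by
    intro x hx
    by_contra hc
    simp only [Set.mem_union, Set.mem_setOf_eq, not_or, not_not] at hc
    exact hx (hc.1 ▸ hc.2 ▸ rfl)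
  have key : (D {x | f (Δf x) ≠ f (Δfhat x)}).toReal ≤
      (D {x | h x ≠ f (Δf x)}).toReal + (D {x | h x ≠ f (Δfhat x)}).toReal := by
    have h1 : D {x | f (Δf x) ≠ f (Δfhat x)} ≤
        D {x | h x ≠ f (Δf x)} + D {x | h x ≠ f (Δfhat x)} :=
      le_trans (measure_mono hsub) (measure_union_le _ _)
    have hA : D {x | h x ≠ f (Δf x)} ≠ ⊤ := measure_ne_top D _
    have hB : D {x | h x ≠ f (Δfhat x)} ≠ ⊤ := measure_ne_top D _
    calc (D {x | f (Δf x) ≠ f (Δfhat x)}).toReal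
        ≤ (D {x | h x ≠ f (Δf x)} + D {x | h x ≠ f (Δfhat x)}).toReal :=
          ENNReal.toReal_mono (by finiteness) h1
      _ = _ := ENNReal.toReal_add hA hB
  constructor
  · intro hgt; linarith
  · intro errstar ε₁ heq hgt; linarith
end

section
/- For every point x in the enlargement set E, it holds that f(Δ_f(x)) = 1 and f(Δ_f̂(x)) = −1. That is, a transparent Jury would classify every x ∈ E positively, while the opaque Jury classifies it negatively. -/
/-- Every point in the enlargement set E is classified positively by the
transparent Jury and negatively by the opaque Jury. -/
theorem enlargement_set_signs
    {X : Type*} (c : X → X → ℝ)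
    (hc_nonneg : ∀ x u, 0 ≤ c x u) (hc_self : ∀ x, c x x = 0)
    (f fhat : X → ℤ) (Δf Δfhat : X → X)
    (hvalf : ∀ x, f x = 1 ∨ f x = -1)
    (hvalfhat : ∀ x, fhat x = 1 ∨ fhat x = -1)
    (hΔf_stay : ∀ x, (f x = 1 ∨ {u | c x u < 2 ∧ f u = 1} = ∅) → Δf x = x)
    (hΔf_move : ∀ x, f x = -1 → {u | c x u < 2 ∧ f u = 1} ≠ ∅ →
      (c x (Δf x) < 2 ∧ f (Δf x) = 1 ∧
        ∀ u, c x u < 2 → f u = 1 → c x (Δf x) ≤ c x u))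
    (hΔfhat_stay : ∀ x, (fhat x = 1 ∨ {u | c x u < 2 ∧ fhat u = 1} = ∅) → Δfhat x = x)
    (hΔfhat_move : ∀ x, fhat x = -1 → {u | c x u < 2 ∧ fhat u = 1} ≠ ∅ →
      (c x (Δfhat x) < 2 ∧ fhat (Δfhat x) = 1 ∧
        ∀ u, c x u < 2 → fhat u = 1 → c x (Δfhat x) ≤ c x u)) :
    ∀ x ∈ {x | f (Δf x) ≠ f (Δfhat x)}, f (Δf x) = 1 ∧ f (Δfhat x) = -1 := by
  intro x hx
  simp only [Set.mem_setOf_eq] at hx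
  rcases hvalf x with hfx | hfx
  · have h1 : Δf x = x := hΔf_stay x (Or.inl hfx)
    rw [h1, hfx] at hx ⊢
    refine ⟨rfl, ?_⟩
    rcases hvalf (Δfhat x) with h | h
    · exact absurd h.symm hx
    · exact h
  · by_cases hne : {u | c x u < 2 ∧ f u = 1} = ∅
    · exfalso
      have h1 : Δf x = x := hΔf_stay x (Or.inr hne)
      rw [h1, hfx] at hx
      have h2 : f (Δfhat x) = 1 := by
        rcases hvalf (Δfhat x) with h | h
        · exact h
        · exact absurd h.symm hx
      rcases hvalfhat x with hh | hh
      · have := hΔfhat_stay x (Or.inl hh)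
        rw [this, hfx] at h2; norm_num at h2
      · by_cases hne2 : {u | c x u < 2 ∧ fhat u = 1} = ∅
        · have := hΔfhat_stay x (Or.inr hne2)
          rw [this, hfx] at h2; norm_num at h2
        · obtain ⟨hc2, _, _⟩ := hΔfhat_move x hh hne2
          have : Δfhat x ∈ {u | c x u < 2 ∧ f u = 1} := ⟨hc2, h2⟩
          rw [hne] at this; exact this
    · obtain ⟨_, h1, _⟩ := hΔf_move x hfx hne
      refine ⟨h1, ?_⟩
      rw [h1] at hx
      rcases hvalf (Δfhat x) with h | h
      · exact absurd h.symm hx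
      · exact h
end

section
/- (Observation: t_f̂ − t > t − t_f.) In the 1D Gaussian threshold setting with 0 < t_f < t < t_f̂ and ε₂ ≥ 2ε₁ where ε₁ = Φ_σ(t − t_f) − 1/2 and ε₂ = Φ_σ(t_f̂) − Φ_σ(t_f), it holds that t_f̂ − t > t − t_f. -/
/-- Equal-length increment comparison for strictly concave functions on `[0,∞)`. -/
lemma aux_shift (f : ℝ → ℝ) (hc : StrictConcaveOn ℝ (Set.Ici (0:ℝ)) f)
    {x y d : ℝ} (hx : 0 ≤ x) (hxy : x < y) (hd : 0 < d) :
    f x + f (y + d) < f (x + d) + f y := by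
  set s := y + d - x with hs
  have hspos : 0 < s := by simp only [hs]; linarith
  set l := d / s with hl
  have hl0 : 0 < l := div_pos hd hspos
  have hl1 : l < 1 := (div_lt_one hspos).2 (by linarith)
  have hls : l * s = d := div_mul_cancel₀ d (ne_of_gt hspos)
  have hmem1 : x ∈ Set.Ici (0:ℝ) := hx
  have hmem2 : y + d ∈ Set.Ici (0:ℝ) := by
    simp only [Set.mem_Ici]; linarith
  have hne : x ≠ y + d := by intro h; linarith
  have e1 : (1 - l) • x + l • (y + d) = x + d := by
    simp only [smul_eq_mul]; nlinarith [hls]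
  have e2 : l • x + (1 - l) • (y + d) = y := by
    simp only [smul_eq_mul]; nlinarith [hls]
  have h1 := hc.2 hmem1 hmem2 hne (by linarith : (0:ℝ) < 1 - l) hl0 (by ring)
  have h2 := hc.2 hmem1 hmem2 hne hl0 (by linarith : (0:ℝ) < 1 - l) (by ring)
  rw [e1] at h1
  rw [e2] at h2
  simp only [smul_eq_mul] at h1 h2
  nlinarith [h1, h2]

/-- Observation: t_fhat − t > t − t_f. -/
theorem contestant_gap_gt_jury_gap
    (Φ : ℝ → ℝ)
    (hmono : StrictMono Φ)
    (hsym : ∀ a, Φ (-a) = 1 - Φ a)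
    (hconc : StrictConcaveOn ℝ (Set.Ici (0:ℝ)) Φ)
    (t tf tfhat ε₁ ε₂ : ℝ)
    (h0 : 0 < tf) (h1 : tf < t) (h2 : t < tfhat)
    (hε₁ : ε₁ = Φ (t - tf) - 1/2) (hε₁pos : 0 < ε₁)
    (hε₂ : ε₂ = Φ tfhat - Φ tf)
    (hge : ε₂ ≥ 2 * ε₁) :
    t - tf < tfhat - t := by
  have h00 : Φ 0 = 1/2 := by
    have := hsym 0
    rw [neg_zero] at this
    linarith
  have hd : 0 < t - tf := by linarith
  have A : Φ 0 + Φ (tf + (t - tf)) < Φ (0 + (t - tf)) + Φ tf :=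
    aux_shift Φ hconc le_rfl h0 hd
  have B : Φ 0 + Φ ((tf + (t - tf)) + (t - tf)) < Φ (0 + (t - tf)) + Φ (tf + (t - tf)) :=
    aux_shift Φ hconc le_rfl (by linarith) hd
  have e1 : tf + (t - tf) = t := by ring
  have e2 : t + (t - tf) = 2*t - tf := by ring
  have e3 : 0 + (t - tf) = t - tf := by ring
  rw [e1, e3] at A
  rw [e1] at B; rw [e2, e3] at B
  have key : Φ (2*t - tf) < Φ tfhat := by linarith
  have := hmono.lt_iff_lt.mp key
  linarith
end

section
/- (POP formula, case t_f < t < t_f̂.) In the 1D Gaussian threshold setting with h(x) = sign(x ≥ 0), thresholds t_f < t_f̂, budget t with t_f < t < t_f̂, and enlargement set E = [t_f − t, t_f̂ − t), the price of opacity equals POP = Φ_σ(t_f̂ − t) − Φ_σ(t − t_f). In particular POP > 0 if and only if t_f̂ − t > t − t_f. -/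
open MeasureTheory ProbabilityTheory Set

variable {v : NNReal}

lemma gauss_noatom (hv : v ≠ 0) (x : ℝ) : gaussianReal 0 v {x} = 0 :=
  gaussianReal_absolutelyContinuous 0 hv (measure_singleton x)

lemma gauss_symm (hv : v ≠ 0) (a : ℝ) :
    gaussianReal 0 v (Iic (-a)) = gaussianReal 0 v (Ici a) := by
  have hmap : (gaussianReal 0 v).map ((-1 : ℝ) * ·) = gaussianReal 0 v := by
    rw [gaussianReal_map_const_mul (-1)]
    norm_num
  have : (gaussianReal 0 v).map ((-1 : ℝ) * ·) (Ici a) = gaussianReal 0 v (Iic (-a)) := by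
    rw [Measure.map_apply (by fun_prop) measurableSet_Ici]
    congr 1
    ext x
    simp
  rw [hmap] at this
  exact this.symm

lemma gauss_Iio (hv : v ≠ 0) (a : ℝ) :
    gaussianReal 0 v (Iio a) = gaussianReal 0 v (Iic a) :=
  measure_congr (Iio_ae_eq_Iic' (gauss_noatom hv a))

lemma gauss_Ici (hv : v ≠ 0) (a : ℝ) :
    (gaussianReal 0 v (Ici a)).toReal = 1 - (gaussianReal 0 v (Iic a)).toReal := by
  have := prob_compl_eq_one_sub (μ := gaussianReal 0 v) (measurableSet_Iic (a := a))
  rw [compl_Iic] at this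
  have h2 : gaussianReal 0 v (Ioi a) = gaussianReal 0 v (Ici a) :=
    measure_congr (Ioi_ae_eq_Ici' (gauss_noatom hv a))
  rw [h2] at this
  rw [this, ENNReal.toReal_sub_of_le prob_le_one (by simp)]
  simp

lemma gauss_Ico (hv : v ≠ 0) {a b : ℝ} (hab : a ≤ b) :
    (gaussianReal 0 v (Ico a b)).toReal
      = (gaussianReal 0 v (Iic b)).toReal - (gaussianReal 0 v (Iic a)).toReal := by
  have hset : Ico a b = Iio b \ Iio a := by
    ext x; simp [Ico, and_comm]
  rw [hset, measure_diff (Iio_subset_Iio hab) measurableSet_Iio.nullMeasurableSet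
    (measure_ne_top _ _),
    ENNReal.toReal_sub_of_le (measure_mono (Iio_subset_Iio hab)) (measure_ne_top _ _),
    gauss_Iio hv, gauss_Iio hv]

lemma gauss_strict_mono (hv : v ≠ 0) {a b : ℝ} (hab : a < b) :
    (gaussianReal 0 v (Iic a)).toReal < (gaussianReal 0 v (Iic b)).toReal := by
  have hpos : 0 < gaussianReal 0 v (Ioc a b) := by
    rcases eq_or_lt_of_le (zero_le : 0 ≤ gaussianReal 0 v (Ioc a b)) with hz | hz
    · exfalso
      have := gaussianReal_absolutelyContinuous' 0 hv hz.symm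
      rw [Real.volume_Ioc] at this
      simp [ENNReal.ofReal_eq_zero, hab] at this
      linarith
    · exact hz
  have hsplit : gaussianReal 0 v (Iic b) = gaussianReal 0 v (Iic a) + gaussianReal 0 v (Ioc a b) := by
    rw [← Iic_union_Ioc_eq_Iic hab.le, measure_union _ measurableSet_Ioc]
    exact Iic_disjoint_Ioc le_rfl
  have hfin : gaussianReal 0 v (Iic a) ≠ ⊤ := measure_ne_top _ _
  rw [hsplit, ENNReal.toReal_add hfin (measure_ne_top _ _)]
  have : 0 < (gaussianReal 0 v (Ioc a b)).toReal :=
    ENNReal.toReal_pos hpos.ne' (measure_ne_top _ _)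
  linarith

/-- POP formula for 1D Gaussian thresholds, case t_f < t < t_fhat (with
t_fhat ≤ t_f + t): POP = Φ_σ(t_fhat − t) − Φ_σ(t − t_f), positive iff
t_fhat − t > t − t_f. -/
theorem pop_formula_case_lt
    (v : NNReal) (hv : v ≠ 0) (t tf tfhat : ℝ)
    (h1 : tf < t) (h2 : t < tfhat) (h3 : tfhat ≤ tf + t) (ht : 0 < t)
    (h f fhat : ℝ → ℤ) (Δf Δfhat : ℝ → ℝ)
    (hh : ∀ x, h x = if 0 ≤ x then 1 else -1)
    (hf : ∀ x, f x = if tf ≤ x then 1 else -1)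
    (hfhat : ∀ x, fhat x = if tfhat ≤ x then 1 else -1)
    (hΔf : ∀ x, Δf x = if tf ≤ x ∨ x < tf - t then x else tf)
    (hΔfhat : ∀ x, Δfhat x = if tfhat ≤ x ∨ x < tfhat - t then x else tfhat) :
    (gaussianReal 0 v {x | h x ≠ f (Δfhat x)}).toReal
        - (gaussianReal 0 v {x | h x ≠ f (Δf x)}).toReal
      = (gaussianReal 0 v (Set.Iic (tfhat - t))).toReal
        - (gaussianReal 0 v (Set.Iic (t - tf))).toReal
    ∧ (0 < (gaussianReal 0 v {x | h x ≠ f (Δfhat x)}).toReal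
            - (gaussianReal 0 v {x | h x ≠ f (Δf x)}).toReal
        ↔ t - tf < tfhat - t) := by
  have hfΔf : ∀ x, f (Δf x) = if tf - t ≤ x then (1:ℤ) else -1 := by
    intro x
    by_cases hc : tf ≤ x ∨ x < tf - t
    · rw [hΔf x, if_pos hc, hf x]
      rcases hc with hc | hc
      · rw [if_pos hc, if_pos (by linarith)]
      · rw [if_neg (by linarith), if_neg (by linarith)]
    · push_neg at hc
      rw [hΔf x, if_neg (by push_neg; exact hc), hf, if_pos le_rfl,
        if_pos hc.2]
  have hfΔfhat : ∀ x, f (Δfhat x) = if tfhat - t ≤ x then (1:ℤ) else -1 := by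
    intro x
    by_cases hc : tfhat ≤ x ∨ x < tfhat - t
    · rw [hΔfhat x, if_pos hc, hf x]
      rcases hc with hc | hc
      · rw [if_pos (by linarith), if_pos (by linarith)]
      · rw [if_neg (by linarith), if_neg (by linarith)]
    · push_neg at hc
      rw [hΔfhat x, if_neg (by push_neg; exact hc), hf, if_pos (by linarith),
        if_pos hc.2]
  have hS1 : {x | h x ≠ f (Δf x)} = Ico (tf - t) 0 := by
    ext x
    simp only [Set.mem_setOf_eq, hh x, hfΔf x, Set.mem_Ico]
    split_ifs with ha hb hb <;> simp <;>
      first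
        | (intro _; linarith)
        | (constructor <;> linarith)
        | linarith
  have hS2 : {x | h x ≠ f (Δfhat x)} = Ico 0 (tfhat - t) := by
    ext x
    simp only [Set.mem_setOf_eq, hh x, hfΔfhat x, Set.mem_Ico]
    split_ifs with ha hb hb <;> simp <;>
      first
        | (intro _; linarith)
        | (constructor <;> linarith)
        | linarith
  set μ := gaussianReal 0 v with hμ
  have hμ1 : (μ {x | h x ≠ f (Δf x)}).toReal
      = (μ (Iic (0:ℝ))).toReal - (μ (Iic (tf - t))).toReal := by
    rw [hS1, gauss_Ico hv (by linarith)]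
  have hμ2 : (μ {x | h x ≠ f (Δfhat x)}).toReal
      = (μ (Iic (tfhat - t))).toReal - (μ (Iic (0:ℝ))).toReal := by
    rw [hS2, gauss_Ico hv (by linarith)]
  have hhalf : (μ (Iic (0:ℝ))).toReal = 1/2 := by
    have hs := gauss_symm hv 0
    rw [neg_zero] at hs
    have := gauss_Ici hv (0:ℝ)
    rw [← hs] at this
    linarith
  have hsymm : (μ (Iic (tf - t))).toReal = 1 - (μ (Iic (t - tf))).toReal := by
    have hs : (tf - t) = -(t - tf) := by ring
    rw [hs, gauss_symm hv (t - tf), gauss_Ici hv (t - tf)]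
  have hmain : (μ {x | h x ≠ f (Δfhat x)}).toReal - (μ {x | h x ≠ f (Δf x)}).toReal
      = (μ (Iic (tfhat - t))).toReal - (μ (Iic (t - tf))).toReal := by
    rw [hμ1, hμ2, hhalf, hsymm]; ring
  refine ⟨hmain, ?_⟩
  rw [hmain]
  constructor
  · intro hpos
    by_contra hle
    push_neg at hle
    have : (μ (Iic (tfhat - t))).toReal ≤ (μ (Iic (t - tf))).toReal :=
      ENNReal.toReal_mono (measure_ne_top _ _) (measure_mono (Iic_subset_Iic.mpr hle))
    linarith
  · intro hlt
    have := gauss_strict_mono hv hlt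
    linarith
end
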